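/- For all real η₁, η₂, θ: γR η₁ θ * γR η₂ θ = γR (2η₁ − η₂) θ * γR η₁ θ, and likewise γL η₁ θ * γL η₂ θ = γL (2η₁ − η₂) θ * γL η₁ θ. -/

import Mathlib

/-! `γR η θ` and `γL η θ` are reflection matrices whose angles are affine in `η`.
A product of two reflections is the rotation by the difference of their angles, so
`R a * R b = R c * R a` whenever `a - b = c - a`; the angles of `γR` (resp. `γL`) at
`η₁, η₂, 2η₁ - η₂` are in exactly this arithmetic relation. -/

open Real Matrix

/-- The chirality matrix `γ5` in the two-dimensional eigenvalue-pair representation. -/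
noncomputable def γ5 : Matrix (Fin 2) (Fin 2) ℝ := !![1, 0; 0, -1]

/-- The overlap Dirac operator on a non-zero eigenvalue pair. -/
noncomputable def D (θ : ℝ) : Matrix (Fin 2) (Fin 2) ℝ :=
  (2 * Real.cos θ) • !![Real.cos θ, Real.sin θ; -Real.sin θ, Real.cos θ]

/-- The family of right chiral γ-matrices `γ_R^(η)`. -/
noncomputable def γR (η θ : ℝ) : Matrix (Fin 2) (Fin 2) ℝ :=
  !![Real.cos ((1 + η) * (θ - π / 2)), Real.sin ((1 + η) * (θ - π / 2));
     Real.sin ((1 + η) * (θ - π / 2)), -Real.cos ((1 + η) * (θ - π / 2))]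

/-- The family of left chiral γ-matrices `γ_L^(η) = γ5 γ_R^(−η) γ5`. -/
noncomputable def γL (η θ : ℝ) : Matrix (Fin 2) (Fin 2) ℝ := γ5 * γR (-η) θ * γ5

noncomputable def reflectionMatrix (a : ℝ) : Matrix (Fin 2) (Fin 2) ℝ :=
  !![cos a, sin a; sin a, -cos a]

noncomputable def rotationMatrix (a : ℝ) : Matrix (Fin 2) (Fin 2) ℝ :=
  !![cos a, -sin a; sin a, cos a]

theorem reflectionMatrix_mul_reflectionMatrix (a b : ℝ) :
    reflectionMatrix a * reflectionMatrix b = rotationMatrix (a - b) := by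
  rw [reflectionMatrix, reflectionMatrix, rotationMatrix, cos_sub, sin_sub]
  ext i j
  fin_cases i <;> fin_cases j <;> simp [Matrix.mul_apply, Fin.sum_univ_succ] <;> ring

theorem reflectionMatrix_mul_eq_of_sub_eq_sub {a b c : ℝ} (h : a - b = c - a) :
    reflectionMatrix a * reflectionMatrix b = reflectionMatrix c * reflectionMatrix a := by
  rw [reflectionMatrix_mul_reflectionMatrix, reflectionMatrix_mul_reflectionMatrix, h]

theorem γ5_mul_reflectionMatrix_mul_γ5 (a : ℝ) :
    γ5 * reflectionMatrix a * γ5 = reflectionMatrix (-a) := by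
  rw [γ5, reflectionMatrix, reflectionMatrix, cos_neg, sin_neg]
  ext i j
  fin_cases i <;> fin_cases j <;> simp [Matrix.mul_apply, Fin.sum_univ_succ]

theorem γR_eq_reflectionMatrix (η θ : ℝ) : γR η θ = reflectionMatrix ((1 + η) * (θ - π / 2)) :=
  rfl

theorem γL_eq_reflectionMatrix (η θ : ℝ) : γL η θ = reflectionMatrix ((η - 1) * (θ - π / 2)) := by
  rw [γL, γR_eq_reflectionMatrix, γ5_mul_reflectionMatrix_mul_γ5]
  ring_nf

/-- Lemma B.7 of the paper: the exchange relations
`γ_R^(η₁) γ_R^(η₂) = γ_R^(2η₁ − η₂) γ_R^(η₁)` and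
`γ_L^(η₁) γ_L^(η₂) = γ_L^(2η₁ − η₂) γ_L^(η₁)`. -/
theorem γR_γL_exchange (η₁ η₂ θ : ℝ) :
    γR η₁ θ * γR η₂ θ = γR (2 * η₁ - η₂) θ * γR η₁ θ ∧
    γL η₁ θ * γL η₂ θ = γL (2 * η₁ - η₂) θ * γL η₁ θ := by
  simp only [γR_eq_reflectionMatrix, γL_eq_reflectionMatrix]
  constructor <;> exact reflectionMatrix_mul_eq_of_sub_eq_sub (by ring)
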